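/- arXiv:1811.10059 — 2 statements merged into one kernel-verified Lean document; each statement's English description precedes it below -/
import Mathlib

section
/- The set G_1 of all automorphisms g of the rooted tree X* satisfying NC(g,l) = o(|X|^l) as l → ∞ is a subgroup of the automorphism group of X*: it contains the identity and is closed under products and inverses. -/
/-- An automorphism of the rooted tree `X*` of finite words over `X`:
a length-preserving, prefix-preserving bijection of `List X`. -/
structure TreeAut (X : Type*) where
  toFun : List X → List X
  length_eq : ∀ w : List X, (toFun w).length = w.length
  prefix_mono : ∀ u v : List X, u <+: v → toFun u <+: toFun v
  bijective : Function.Bijective toFun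

/-- The identity automorphism of the rooted tree. -/
def TreeAut.id (X : Type*) : TreeAut X :=
  ⟨fun w => w, fun _ => rfl, fun _ _ h => h, Function.bijective_id⟩

/-- The product `g·h`: first apply `g`, then `h`. -/
def TreeAut.comp {X : Type*} (g h : TreeAut X) : TreeAut X :=
  ⟨fun w => h.toFun (g.toFun w),
   fun w => by rw [h.length_eq, g.length_eq],
   fun u v huv => h.prefix_mono _ _ (g.prefix_mono _ _ huv),
   Function.Bijective.comp h.bijective g.bijective⟩

/-- `IsSection g w s` : `s` is the section `g|_w` of `g` at the word `w`,
i.e. `g (w ++ u) = g w ++ s u` for all finite words `u`. -/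
def IsSection {X : Type*} (g : TreeAut X) (w : List X) (s : TreeAut X) : Prop :=
  ∀ u : List X, g.toFun (w ++ u) = g.toFun w ++ s.toFun u

/-- `NS g l` : the number of words of length `l` whose section under `g`
is not the identity automorphism. -/
noncomputable def NS {X : Type*} (g : TreeAut X) (l : ℕ) : ℕ :=
  {w : List X | w.length = l ∧ ∃ u : List X, g.toFun (w ++ u) ≠ g.toFun w ++ u}.ncard

/-- `a` belongs to an unconditional cycle of length `n`: there are automorphisms
`a_0 = a, a_1, ..., a_{n-1}` such that for every `i < n` and every letter `x`,
the section of `a_i` at `x` is `a_{(i+1) mod n}`. -/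
def InUC {X : Type*} (a : TreeAut X) (n : ℕ) : Prop :=
  0 < n ∧ ∃ f : ℕ → TreeAut X, f 0 = a ∧
    ∀ i < n, ∀ x : X, IsSection (f i) [x] (f ((i + 1) % n))

/-- `NC g l` : the number of words of length `l` whose section under `g`
does not belong to any unconditional cycle. -/
noncomputable def NC {X : Type*} (g : TreeAut X) (l : ℕ) : ℕ :=
  {w : List X | w.length = l ∧
    ¬ ∃ (s : TreeAut X) (n : ℕ), IsSection g w s ∧ InUC s n}.ncard

/-- Membership in `G₀`: `NS g l = o(|X|^l)` as `l → ∞`. -/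
def memG0 {X : Type*} [Fintype X] (g : TreeAut X) : Prop :=
  ∀ ε : ℝ, 0 < ε → ∃ L : ℕ, ∀ l ≥ L, (NS g l : ℝ) ≤ ε * (Fintype.card X : ℝ) ^ l

/-- Membership in `G₁`: `NC g l = o(|X|^l)` as `l → ∞`. -/
def memG1 {X : Type*} [Fintype X] (g : TreeAut X) : Prop :=
  ∀ ε : ℝ, 0 < ε → ∃ L : ℕ, ∀ l ≥ L, (NC g l : ℝ) ≤ ε * (Fintype.card X : ℝ) ^ l

/-- The prefix of length `n` of an infinite word `w : ℕ → X`. -/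
def prefixOf {X : Type*} (w : ℕ → X) (n : ℕ) : List X := (List.range n).map w

/-- `actsOn g w gw` : `gw` is the image `g·w` of the infinite word `w` under
the action of `g` on infinite words (prefixes of `gw` are the `g`-images of
the prefixes of `w`). -/
def actsOn {X : Type*} (g : TreeAut X) (w gw : ℕ → X) : Prop :=
  ∀ n : ℕ, g.toFun (prefixOf w n) = prefixOf gw n

/-- The image `g·A` of a set `A` of infinite words under the action of `g`. -/
def actImage {X : Type*} (g : TreeAut X) (A : Set (ℕ → X)) : Set (ℕ → X) :=
  {v | ∃ w ∈ A, actsOn g w v}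

section Aux

variable {X : Type*}

lemma treeAut_prefix_unique {p q v : List X} (hp : p <+: v) (hq : q <+: v)
    (h : p.length = q.length) : p = q := by
  rw [List.prefix_iff_eq_take] at hp hq
  rw [hp, hq, h]

lemma TreeAut.prefix_reflect (g : TreeAut X) {u v : List X}
    (h : g.toFun u <+: g.toFun v) : u <+: v := by
  have hlen : u.length ≤ v.length := by
    have := h.length_le
    simpa [g.length_eq] using this
  have h1 : g.toFun (v.take u.length) <+: g.toFun v :=
    g.prefix_mono _ _ (List.take_prefix _ _)
  have h2 : (g.toFun (v.take u.length)).length = (g.toFun u).length := by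
    simp only [g.length_eq, List.length_take]
    omega
  have h3 : g.toFun (v.take u.length) = g.toFun u := treeAut_prefix_unique h1 h h2
  have h4 : v.take u.length = u := g.bijective.1 h3
  rw [← h4]
  exact List.take_prefix _ _

/-- The inverse automorphism. -/
noncomputable def invAut (g : TreeAut X) : TreeAut X where
  toFun := (Equiv.ofBijective g.toFun g.bijective).symm
  length_eq v := by
    conv_rhs => rw [← Equiv.ofBijective_apply_symm_apply g.toFun g.bijective v]
    rw [g.length_eq]
  prefix_mono u v h := by
    apply g.prefix_reflect
    rwa [Equiv.ofBijective_apply_symm_apply g.toFun g.bijective u,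
      Equiv.ofBijective_apply_symm_apply g.toFun g.bijective v]
  bijective := (Equiv.ofBijective g.toFun g.bijective).symm.bijective

lemma invAut_left (g : TreeAut X) (w : List X) : (invAut g).toFun (g.toFun w) = w :=
  Equiv.ofBijective_symm_apply_apply g.toFun g.bijective w

lemma invAut_right (g : TreeAut X) (v : List X) : g.toFun ((invAut g).toFun v) = v :=
  Equiv.ofBijective_apply_symm_apply g.toFun g.bijective v

lemma section_append (g : TreeAut X) (w u : List X) :
    g.toFun (w ++ u) = g.toFun w ++ (g.toFun (w ++ u)).drop w.length := by
  obtain ⟨t, ht⟩ := g.prefix_mono w (w ++ u) (List.prefix_append w u)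
  have hd : (g.toFun (w ++ u)).drop w.length = t := by
    rw [← ht, ← g.length_eq w]
    exact List.drop_left
  rw [hd, ht]

/-- The section of `g` at `w`, as an automorphism. -/
noncomputable def sectionAt (g : TreeAut X) (w : List X) : TreeAut X where
  toFun u := (g.toFun (w ++ u)).drop w.length
  length_eq u := by
    rw [List.length_drop, g.length_eq, List.length_append]
    omega
  prefix_mono u v h := by
    show (g.toFun (w ++ u)).drop w.length <+: (g.toFun (w ++ v)).drop w.length
    obtain ⟨t, ht⟩ := g.prefix_mono (w ++ u) (w ++ v) ((List.prefix_append_right_inj w).mpr h)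
    rw [← ht, List.drop_append_of_le_length]
    · exact ⟨t, rfl⟩
    · rw [g.length_eq, List.length_append]; omega
  bijective := by
    constructor
    · intro u v h
      have h1 := section_append g w u
      have h2 := section_append g w v
      have h3 : g.toFun (w ++ u) = g.toFun (w ++ v) := by
        rw [h1, h2]
        exact congrArg _ h
      have h4 := g.bijective.1 h3
      exact List.append_cancel_left h4
    · intro v
      obtain ⟨z, hz⟩ := g.bijective.2 (g.toFun w ++ v)
      have hwz : w <+: z := g.prefix_reflect (by rw [hz]; exact List.prefix_append _ _)
      obtain ⟨u, rfl⟩ := hwz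
      refine ⟨u, ?_⟩
      show (g.toFun (w ++ u)).drop w.length = v
      rw [hz, ← g.length_eq w]
      exact List.drop_left

lemma isSection_sectionAt (g : TreeAut X) (w : List X) : IsSection g w (sectionAt g w) :=
  fun u => section_append g w u

lemma IsSection.compSec {g h s t : TreeAut X} {w : List X}
    (hs : IsSection g w s) (ht : IsSection h (g.toFun w) t) :
    IsSection (g.comp h) w (s.comp t) := by
  intro u
  show h.toFun (g.toFun (w ++ u)) = h.toFun (g.toFun w) ++ t.toFun (s.toFun u)
  rw [hs u, ht (s.toFun u)]

lemma InUC.compUC {s t : TreeAut X} {n m : ℕ} (hs : InUC s n) (ht : InUC t m) :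
    InUC (s.comp t) (n * m) := by
  obtain ⟨hn, fs, hfs0, hfs⟩ := hs
  obtain ⟨hm, ft, hft0, hft⟩ := ht
  refine ⟨Nat.mul_pos hn hm, fun i => (fs (i % n)).comp (ft (i % m)), ?_, ?_⟩
  · simp [hfs0, hft0]
  · intro i _ x
    have h1 : IsSection (fs (i % n)) [x] (fs ((i + 1) % n)) := by
      have := hfs (i % n) (Nat.mod_lt _ hn) x
      rwa [Nat.mod_add_mod] at this
    have hlen1 : ((fs (i % n)).toFun [x]).length = 1 := by
      rw [(fs (i % n)).length_eq]; rfl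
    obtain ⟨y, hy⟩ := List.length_eq_one_iff.mp hlen1
    have h2 : IsSection (ft (i % m)) ((fs (i % n)).toFun [x]) (ft ((i + 1) % m)) := by
      rw [hy]
      have := hft (i % m) (Nat.mod_lt _ hm) y
      rwa [Nat.mod_add_mod] at this
    have h3 := h1.compSec h2
    simpa [Nat.mod_mod_of_dvd _ (dvd_mul_right n m),
      Nat.mod_mod_of_dvd _ (dvd_mul_left m n)] using h3

lemma isSection_invAut {g s : TreeAut X} {w : List X} (h : IsSection g w s) :
    IsSection (invAut g) (g.toFun w) (invAut s) := by
  intro v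
  have key : g.toFun (w ++ (invAut s).toFun v) = g.toFun w ++ v := by
    rw [h, invAut_right]
  calc (invAut g).toFun (g.toFun w ++ v)
      = (invAut g).toFun (g.toFun (w ++ (invAut s).toFun v)) := by rw [key]
    _ = w ++ (invAut s).toFun v := invAut_left g _
    _ = (invAut g).toFun (g.toFun w) ++ (invAut s).toFun v := by rw [invAut_left]

lemma InUC.invUC {s : TreeAut X} {n : ℕ} (h : InUC s n) : InUC (invAut s) n := by
  obtain ⟨hn, fs, h0, hstep⟩ := h
  refine ⟨hn, fun i => invAut (fs i), ?_, ?_⟩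
  · show invAut (fs 0) = invAut s
    rw [h0]
  intro i hi x
  have hlen1 : ((invAut (fs i)).toFun [x]).length = 1 := by
    rw [(invAut (fs i)).length_eq]; rfl
  obtain ⟨y, hy⟩ := List.length_eq_one_iff.mp hlen1
  have hx : (fs i).toFun [y] = [x] := by rw [← hy, invAut_right]
  have := isSection_invAut (hstep i hi y)
  rwa [hx] at this

lemma isSection_gi {g gi s : TreeAut X}
    (hgig : ∀ v : List X, gi.toFun (g.toFun v) = v)
    (hggi : ∀ v : List X, g.toFun (gi.toFun v) = v)
    {w : List X} (h : IsSection g (gi.toFun w) s) : IsSection gi w (invAut s) := by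
  intro v
  have key : g.toFun (gi.toFun w ++ (invAut s).toFun v) = w ++ v := by
    rw [h, invAut_right, hggi]
  calc gi.toFun (w ++ v)
      = gi.toFun (g.toFun (gi.toFun w ++ (invAut s).toFun v)) := by rw [key]
    _ = gi.toFun w ++ (invAut s).toFun v := hgig _

/-- The set counted by `NC`. -/
def badSet (g : TreeAut X) (l : ℕ) : Set (List X) :=
  {w | w.length = l ∧ ¬ ∃ (s : TreeAut X) (n : ℕ), IsSection g w s ∧ InUC s n}

lemma NC_eq (g : TreeAut X) (l : ℕ) : NC g l = (badSet g l).ncard := rfl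

lemma badSet_finite [Fintype X] (g : TreeAut X) (l : ℕ) : (badSet g l).Finite :=
  (List.finite_length_eq X l).subset (fun _ hw => hw.1)

lemma NC_comp_le [Fintype X] (g h : TreeAut X) (l : ℕ) :
    NC (g.comp h) l ≤ NC g l + NC h l := by
  set D : Set (List X) := {w | w.length = l ∧ g.toFun w ∈ badSet h l} with hD
  have hDfin : D.Finite := (List.finite_length_eq X l).subset (fun _ hw => hw.1)
  have hsub : badSet (g.comp h) l ⊆ badSet g l ∪ D := by
    rintro w ⟨hlen, hbad⟩
    by_cases h1 : w ∈ badSet g l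
    · exact Or.inl h1
    right
    have hg : ∃ (s : TreeAut X) (n : ℕ), IsSection g w s ∧ InUC s n := by
      by_contra h2; exact h1 ⟨hlen, h2⟩
    obtain ⟨s, ns, hs, hsUC⟩ := hg
    refine ⟨hlen, by rw [g.length_eq]; exact hlen, ?_⟩
    rintro ⟨t, m, ht, htUC⟩
    exact hbad ⟨s.comp t, ns * m, hs.compSec ht, hsUC.compUC htUC⟩
  have hDle : D.ncard ≤ NC h l := by
    rw [NC_eq]
    exact Set.ncard_le_ncard_of_injOn g.toFun (fun w hw => hw.2)
      (g.bijective.1.injOn) (badSet_finite h l)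
  calc NC (g.comp h) l = (badSet (g.comp h) l).ncard := rfl
    _ ≤ (badSet g l ∪ D).ncard :=
        Set.ncard_le_ncard hsub ((badSet_finite g l).union hDfin)
    _ ≤ (badSet g l).ncard + D.ncard := Set.ncard_union_le _ _
    _ ≤ NC g l + NC h l := by
        rw [NC_eq]
        exact Nat.add_le_add le_rfl hDle

lemma NC_inv_le [Fintype X] (g gi : TreeAut X)
    (hgig : ∀ v : List X, gi.toFun (g.toFun v) = v)
    (hggi : ∀ v : List X, g.toFun (gi.toFun v) = v) (l : ℕ) :
    NC gi l ≤ NC g l := by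
  rw [NC_eq, NC_eq]
  apply Set.ncard_le_ncard_of_injOn gi.toFun ?_ (gi.bijective.1.injOn) (badSet_finite g l)
  rintro w ⟨hlen, hbad⟩
  refine ⟨by rw [gi.length_eq]; exact hlen, ?_⟩
  rintro ⟨s, n, hs, hUC⟩
  exact hbad ⟨invAut s, n, isSection_gi hgig hggi hs, hUC.invUC⟩

end Aux

/-- `G₁` is a subgroup: it contains the identity and is closed
under products and inverses. -/
theorem memG1_subgroup {X : Type*} [Fintype X] (hX : 1 < Fintype.card X) :
    memG1 (TreeAut.id X) ∧
    (∀ g h : TreeAut X, memG1 g → memG1 h → memG1 (g.comp h)) ∧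
    (∀ g gi : TreeAut X,
      (∀ v : List X, gi.toFun (g.toFun v) = v) →
      (∀ v : List X, g.toFun (gi.toFun v) = v) →
      memG1 g → memG1 gi) := by
  refine ⟨?_, ?_, ?_⟩
  · intro ε hε
    refine ⟨0, fun l _ => ?_⟩
    have hzero : NC (TreeAut.id X) l = 0 := by
      rw [NC_eq]
      have hempty : badSet (TreeAut.id X) l = ∅ := by
        rw [Set.eq_empty_iff_forall_notMem]
        rintro w ⟨_, hbad⟩
        exact hbad ⟨TreeAut.id X, 1, fun u => rfl,
          ⟨one_pos, fun _ => TreeAut.id X, rfl, fun i _ x u => rfl⟩⟩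
      rw [hempty, Set.ncard_empty]
    rw [hzero]
    have : (0:ℝ) ≤ ε * (Fintype.card X : ℝ) ^ l := by positivity
    simpa using this
  · intro g h hg hh ε hε
    obtain ⟨L1, hL1⟩ := hg (ε/2) (by positivity)
    obtain ⟨L2, hL2⟩ := hh (ε/2) (by positivity)
    refine ⟨max L1 L2, fun l hl => ?_⟩
    have h1 := hL1 l (le_trans (le_max_left L1 L2) hl)
    have h2 := hL2 l (le_trans (le_max_right L1 L2) hl)
    have h3 : (NC (g.comp h) l : ℝ) ≤ (NC g l : ℝ) + (NC h l : ℝ) := by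
      exact_mod_cast NC_comp_le g h l
    linarith
  · intro g gi hgig hggi hg ε hε
    obtain ⟨L, hL⟩ := hg ε hε
    refine ⟨L, fun l hl => ?_⟩
    have h1 : (NC gi l : ℝ) ≤ (NC g l : ℝ) :=
      Nat.cast_le.mpr (NC_inv_le g gi hgig hggi l)
    exact h1.trans (hL l hl)
end

section
/- Let g be an automorphism of X*, l, t, c ≥ 1 natural numbers, and w an infinite word over X such that w(k + t) = w(k) for all k ≥ l (i.e. w is l-almost periodic with a period of length t). If the section of g at the length-l prefix w[:l] belongs to an unconditional cycle of length c, then the image g·w satisfies (g·w)(k + lcm(t,c)) = (g·w)(k) for all k ≥ l; in particular g·w is l-almost periodic with a period whose length divides lcm(t, c). -/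
lemma TreeAut.toFun_nil {X : Type*} (g : TreeAut X) : g.toFun [] = [] :=
  List.length_eq_zero_iff.mp (g.length_eq [])

lemma isSection_nil {X : Type*} (g : TreeAut X) : IsSection g [] g := by
  intro u; simp [g.toFun_nil]

lemma isSection_append {X : Type*} {g s s' : TreeAut X} {p u : List X}
    (h1 : IsSection g p s) (h2 : IsSection s u s') :
    IsSection g (p ++ u) s' := by
  intro q
  rw [List.append_assoc, h1, h2, h1, List.append_assoc]

lemma prefixOf_add {X : Type*} (w : ℕ → X) (a b : ℕ) :
    prefixOf w (a + b) = prefixOf w a ++ (List.range b).map (fun i => w (a + i)) := by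
  simp [prefixOf, List.range_add, List.map_map, Function.comp]

/-- if `w` is `l`-almost periodic with period length `t` and the
section of `g` at `w[:l]` belongs to a UC of length `c`, then `g·w` is
`l`-almost periodic with period length dividing `lcm(t,c)`. -/
theorem image_almost_periodic {X : Type*} [Fintype X] (hX : 1 < Fintype.card X)
    (g : TreeAut X) (l t c : ℕ) (hl : 1 ≤ l) (ht : 1 ≤ t) (hc : 1 ≤ c)
    (w : ℕ → X) (hw : ∀ k ≥ l, w (k + t) = w k)
    (s : TreeAut X) (hs : IsSection g (prefixOf w l) s) (hUC : InUC s c)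
    (gw : ℕ → X) (hact : actsOn g w gw) :
    ∀ k ≥ l, gw (k + Nat.lcm t c) = gw k := by
  obtain ⟨hcpos, f, hf0, hfsec⟩ := hUC
  set T := Nat.lcm t c with hT
  -- sections of members of the cycle along arbitrary words
  have hsecAll : ∀ (v : List X) (i : ℕ), i < c →
      IsSection (f i) v (f ((i + v.length) % c)) := by
    intro v
    induction v with
    | nil =>
      intro i hi
      simpa [Nat.mod_eq_of_lt hi] using isSection_nil (f i)
    | cons x v ih =>
      intro i hi
      have h1 := hfsec i hi x
      have h2 := ih ((i + 1) % c) (Nat.mod_lt _ hcpos)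
      have h3 := isSection_append h1 h2
      have heq : ((i + 1) % c + v.length) % c = (i + (x :: v).length) % c := by
        rw [Nat.mod_add_mod]
        congr 1
        simp [List.length_cons]
        omega
      simp only [List.singleton_append] at h3
      rwa [heq] at h3
  -- periodicity of w with period T
  have hmul : ∀ q : ℕ, ∀ k ≥ l, w (k + t * q) = w k := by
    intro q
    induction q with
    | zero => intro k _; simp
    | succ q ih =>
      intro k hk
      have h1 : k + t * (q + 1) = (k + t * q) + t := by ring
      rw [h1, hw _ (hk.trans (Nat.le_add_right _ _)), ih k hk]
  have hwT : ∀ k ≥ l, w (k + T) = w k := by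
    obtain ⟨q, hq⟩ := Nat.dvd_lcm_left t c
    intro k hk
    rw [hT, hq]
    exact hmul q k hk
  -- the words between positions l and l + m
  set u : ℕ → List X := fun m => (List.range m).map (fun i => w (l + i)) with hu
  have hulen : ∀ m, (u m).length = m := by intro m; simp [hu]
  have hU : ∀ m, u (T + m) = u T ++ u m := by
    intro m
    simp only [hu, List.range_add, List.map_append, List.map_map]
    congr 1
    apply List.map_congr_left
    intro i _
    simp only [Function.comp_apply]
    have h1 : l + (T + i) = (l + i) + T := by ring
    rw [h1, hwT (l + i) (Nat.le_add_right _ _)]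
  -- the section of s at u T is s itself
  have hTmod : T % c = 0 := Nat.mod_eq_zero_of_dvd (Nat.dvd_lcm_right t c)
  have hsecT : IsSection s (u T) s := by
    have h := hsecAll (u T) 0 hcpos
    rw [hf0, hulen, Nat.zero_add, hTmod, hf0] at h
    exact h
  -- image of prefixes
  have hG : ∀ m, g.toFun (prefixOf w (l + m)) = g.toFun (prefixOf w l) ++ s.toFun (u m) := by
    intro m
    rw [prefixOf_add, hs (u m)]
  -- getElem? extraction of letters
  have hlen_gl : (g.toFun (prefixOf w l)).length = l := by
    rw [g.length_eq]; simp [prefixOf]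
  have hget : ∀ n k, k < n → (prefixOf gw n)[k]? = some (gw k) := by
    intro n k hk
    simp [prefixOf, List.getElem?_map, List.getElem?_range hk]
  have key : ∀ m, 1 ≤ m → ∀ k, k + 1 = l + m →
      some (gw k) = (s.toFun (u m))[m - 1]? := by
    intro m hm k hk
    have h1 : (prefixOf gw (l + m))[k]? = some (gw k) := hget _ _ (by omega)
    rw [← hact (l + m), hG m, List.getElem?_append_right (by omega)] at h1
    rw [← h1]
    congr 1
    omega
  intro k hk
  set m := k + 1 - l with hm
  have hkm : k + 1 = l + m := by omega
  have hkTm : k + T + 1 = l + (T + m) := by omega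
  have e1 : some (gw k) = (s.toFun (u m))[m - 1]? := key m (by omega) k hkm
  have e2 : some (gw (k + T)) = (s.toFun (u (T + m)))[T + m - 1]? :=
    key (T + m) (by omega) (k + T) hkTm
  rw [hU m, hsecT (u m), List.getElem?_append_right (by rw [s.length_eq, hulen]; omega)] at e2
  rw [s.length_eq, hulen] at e2
  have e3 : T + m - 1 - T = m - 1 := by omega
  rw [e3, ← e1] at e2
  exact Option.some.inj e2
end
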